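/- Let u : ℝ → ℝ be a bounded continuous function and define on the upper half-plane H the functions a(ρ,η) = (ρ/2) ∫_ℝ (y−η)(ρ² + (η−y)²)^{−3/2} u(y) dy and b(ρ,η) = (ρ²/2) ∫_ℝ (ρ² + (η−y)²)^{−3/2} u(y) dy. Then a and b are continuously differentiable on H and the pair (a,b) satisfies the Joyce equation: ρ(∂a/∂ρ + ∂b/∂η) = a and ∂a/∂η = ∂b/∂ρ at every point of H. -/

import Mathlib

/-!
Both functions are smears `∫ K(ρ, η - y) u(y) dy` of `u` against point-source kernels
`K_A(ρ, s) = -ρ s / (2 (ρ² + s²)^{3/2})` and `K_B(ρ, s) = ρ² / (2 (ρ² + s²)^{3/2})`. The kernels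
and their first partial derivatives are `O(1 / (ρ² + s²))` locally uniformly in `ρ > 0`; near a
point `(ρ₀, η₀)` this gives the integrable majorant `M / (1 + (y - η₀)²)`, so one may
differentiate under the integral sign, and the partial derivatives of the smears are the smears of
the kernels' partial derivatives, continuous by dominated convergence. The Joyce equation is
linear and the kernel pair satisfies it pointwise, so the smears satisfy it too.
-/

open MeasureTheory

/-- Partial derivative in the first variable (ρ). -/
noncomputable def pdr (f : ℝ → ℝ → ℝ) (ρ η : ℝ) : ℝ := deriv (fun r => f r η) ρ

/-- Partial derivative in the second variable (η). -/
noncomputable def pde (f : ℝ → ℝ → ℝ) (ρ η : ℝ) : ℝ := deriv (fun e => f ρ e) η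

/-- First component of the smeared Joyce solution attached to the density u. -/
noncomputable def smearedA (u : ℝ → ℝ) (ρ η : ℝ) : ℝ :=
  ρ / 2 * ∫ y : ℝ, (y - η) * (ρ ^ 2 + (η - y) ^ 2) ^ (-(3 : ℝ) / 2) * u y

/-- Second component of the smeared Joyce solution attached to the density u. -/
noncomputable def smearedB (u : ℝ → ℝ) (ρ η : ℝ) : ℝ :=
  ρ ^ 2 / 2 * ∫ y : ℝ, (ρ ^ 2 + (η - y) ^ 2) ^ (-(3 : ℝ) / 2) * u y

open Filter Topology ContinuousLinearMap

theorem contDiffOn_one_of_hasFDerivAt {𝕜 E F : Type*} [NontriviallyNormedField 𝕜]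
    [NormedAddCommGroup E] [NormedSpace 𝕜 E] [NormedAddCommGroup F] [NormedSpace 𝕜 F]
    {f : E → F} {f' : E → E →L[𝕜] F} {s : Set E} (hs : IsOpen s)
    (hf : ∀ x ∈ s, HasFDerivAt f (f' x) x) (hf' : ContinuousOn f' s) : ContDiffOn 𝕜 1 f s :=
  fun _ hx => (contDiffAt_one_iff.2 ⟨f', s, hs.mem_nhds hx, hf', hf⟩).contDiffWithinAt

section PartialDerivatives

variable {f : ℝ → ℝ → ℝ} {a b ρ η : ℝ}

lemma pdr_eq_of_hasFDerivAt
    (h : HasFDerivAt (fun p : ℝ × ℝ => f p.1 p.2) (a • fst ℝ ℝ ℝ + b • snd ℝ ℝ ℝ) (ρ, η)) :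
    pdr f ρ η = a := by
  simpa [pdr, Function.comp_def] using (h.comp_hasDerivAt (f := fun r => (r, η)) ρ
    ((hasDerivAt_id' ρ).prodMk (hasDerivAt_const ρ η))).deriv

lemma pde_eq_of_hasFDerivAt
    (h : HasFDerivAt (fun p : ℝ × ℝ => f p.1 p.2) (a • fst ℝ ℝ ℝ + b • snd ℝ ℝ ℝ) (ρ, η)) :
    pde f ρ η = b := by
  simpa [pde, Function.comp_def] using (h.comp_hasDerivAt (f := fun e => (ρ, e)) η
    ((hasDerivAt_const η ρ).prodMk (hasDerivAt_id' η))).deriv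

end PartialDerivatives

lemma norm_smul_fst_add_smul_snd_le (a b : ℝ) : ‖a • fst ℝ ℝ ℝ + b • snd ℝ ℝ ℝ‖ ≤ ‖a‖ + ‖b‖ :=
  (norm_add_le _ _).trans <| add_le_add
    ((norm_smul_le _ _).trans (mul_le_of_le_one_right (norm_nonneg _) (norm_fst_le ℝ ℝ ℝ)))
    ((norm_smul_le _ _).trans (mul_le_of_le_one_right (norm_nonneg _) (norm_snd_le ℝ ℝ ℝ)))

lemma fst_mem_Ioo_of_mem_ball {p₀ p : ℝ × ℝ} (hp : p ∈ Metric.ball p₀ (p₀.1 / 2)) :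
    p.1 ∈ Set.Ioo 0 (2 * p₀.1) := by
  rw [Metric.mem_ball, Prod.dist_eq, max_lt_iff, Real.dist_eq, abs_lt] at hp
  constructor <;> linarith [hp.1.1, hp.1.2]

lemma mul_one_add_sq_le_of_mem_ball {p₀ p : ℝ × ℝ} (hp : p ∈ Metric.ball p₀ (p₀.1 / 2)) (y : ℝ) :
    p₀.1 ^ 2 * (1 + (y - p₀.2) ^ 2) ≤ 4 * (1 + p₀.1 ^ 2) * (p.1 ^ 2 + (p.2 - y) ^ 2) := by
  rw [Metric.mem_ball, Prod.dist_eq, max_lt_iff, Real.dist_eq, Real.dist_eq, abs_lt, abs_lt] at hp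
  obtain ⟨⟨h₁, h₂⟩, h₃, h₄⟩ := hp
  have hρ : p₀.1 ^ 2 ≤ 4 * p.1 ^ 2 := by nlinarith
  have ht : (y - p₀.2) ^ 2 ≤ 4 * (p.1 ^ 2 + (p.2 - y) ^ 2) := by
    nlinarith [sq_nonneg (y - p₀.2 + 2 * (p.2 - y))]
  nlinarith [sq_nonneg p₀.1, sq_nonneg (p.2 - y)]

structure IsSmearableKernel (k : ℝ × ℝ → ℝ) : Prop where
  continuousAt : ∀ v : ℝ × ℝ, 0 < v.1 → ContinuousAt k v
  decay : ∀ R, ∃ C, ∀ v : ℝ × ℝ, 0 < v.1 → v.1 ≤ R → |k v| ≤ C / (v.1 ^ 2 + v.2 ^ 2)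

noncomputable def smear (k : ℝ × ℝ → ℝ) (u : ℝ → ℝ) (p : ℝ × ℝ) : ℝ :=
  ∫ y, k (p - (0, y)) * u y

namespace IsSmearableKernel

variable {k : ℝ × ℝ → ℝ} {u : ℝ → ℝ} {C : ℝ}

lemma exists_norm_integrand_le (hk : IsSmearableKernel k) (hC : ∀ y, |u y| ≤ C) {p₀ : ℝ × ℝ} :
    ∃ M, ∀ p ∈ Metric.ball p₀ (p₀.1 / 2), ∀ y,
      ‖k (p - (0, y)) * u y‖ ≤ M * (1 + (y - p₀.2) ^ 2)⁻¹ := by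
  obtain ⟨K, hK⟩ := hk.decay (2 * p₀.1)
  refine ⟨4 * (1 + p₀.1 ^ 2) / p₀.1 ^ 2 * K * C, fun p hp y => ?_⟩
  obtain ⟨hp₁, hp₂⟩ := fst_mem_Ioo_of_mem_ball hp
  have hq : 0 < p.1 ^ 2 + (p.2 - y) ^ 2 := by positivity
  have hkv : |k (p - (0, y))| ≤ K / (p.1 ^ 2 + (p.2 - y) ^ 2) := by
    have := hK (p - (0, y)) (by simp only [Prod.fst_sub, sub_zero]; linarith)
      (by simp only [Prod.fst_sub, sub_zero]; linarith)
    simpa only [Prod.fst_sub, Prod.snd_sub, sub_zero] using this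
  have hK0 : 0 ≤ K := by
    have := (abs_nonneg _).trans hkv
    rwa [le_div_iff₀ hq, zero_mul] at this
  have hC0 : 0 ≤ C := (abs_nonneg _).trans (hC 0)
  have hgeom := mul_one_add_sq_le_of_mem_ball hp y
  rw [Real.norm_eq_abs, abs_mul]
  calc |k (p - (0, y))| * |u y| ≤ K / (p.1 ^ 2 + (p.2 - y) ^ 2) * C :=
        mul_le_mul hkv (hC y) (abs_nonneg _) (hkv.trans' (abs_nonneg _))
    _ ≤ K / (p₀.1 ^ 2 * (1 + (y - p₀.2) ^ 2) / (4 * (1 + p₀.1 ^ 2))) * C := by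
        have hp₀ : 0 < p₀.1 := by linarith
        gcongr
        rw [div_le_iff₀ (by positivity)]
        linarith
    _ = 4 * (1 + p₀.1 ^ 2) / p₀.1 ^ 2 * K * C * (1 + (y - p₀.2) ^ 2)⁻¹ := by
        field_simp

lemma continuous_integrand (hk : IsSmearableKernel k) (hu : Continuous u) {p : ℝ × ℝ}
    (hp : 0 < p.1) : Continuous fun y => k (p - (0, y)) * u y :=
  (continuous_iff_continuousAt.2 fun _ =>
    (hk.continuousAt _ (by simpa using hp)).comp (by fun_prop)).mul hu

lemma integrable_integrand (hk : IsSmearableKernel k) (hu : Continuous u) (hC : ∀ y, |u y| ≤ C)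
    {p : ℝ × ℝ} (hp : 0 < p.1) : Integrable fun y => k (p - (0, y)) * u y := by
  obtain ⟨M, hM⟩ := hk.exists_norm_integrand_le hC (p₀ := p)
  exact ((integrable_inv_one_add_sq.comp_sub_right p.2).const_mul M).mono'
    (hk.continuous_integrand hu hp).aestronglyMeasurable
    (.of_forall (hM p (Metric.mem_ball_self (by linarith))))

lemma continuousAt_smear (hk : IsSmearableKernel k) (hu : Continuous u) (hC : ∀ y, |u y| ≤ C)
    {p₀ : ℝ × ℝ} (hp₀ : 0 < p₀.1) : ContinuousAt (smear k u) p₀ := by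
  obtain ⟨M, hM⟩ := hk.exists_norm_integrand_le hC (p₀ := p₀)
  have hball : Metric.ball p₀ (p₀.1 / 2) ∈ 𝓝 p₀ := Metric.ball_mem_nhds _ (by linarith)
  refine continuousAt_of_dominated
    (eventually_of_mem hball fun p hp =>
      (hk.continuous_integrand hu (fst_mem_Ioo_of_mem_ball hp).1).aestronglyMeasurable)
    (eventually_of_mem hball fun p hp => .of_forall (hM p hp))
    ((integrable_inv_one_add_sq.comp_sub_right p₀.2).const_mul M) (.of_forall fun y => ?_)
  exact ((hk.continuousAt _ (by simpa using hp₀)).comp (by fun_prop)).mul continuousAt_const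

end IsSmearableKernel

section Smear

variable {k k₁ k₂ : ℝ × ℝ → ℝ} {u : ℝ → ℝ} {C : ℝ}

lemma hasFDerivAt_smear_integrand
    (hderiv : ∀ v : ℝ × ℝ, 0 < v.1 → HasFDerivAt k (k₁ v • fst ℝ ℝ ℝ + k₂ v • snd ℝ ℝ ℝ) v)
    {p : ℝ × ℝ} (hp : 0 < p.1) (y : ℝ) :
    HasFDerivAt (fun p => k (p - (0, y)) * u y)
      ((k₁ (p - (0, y)) * u y) • fst ℝ ℝ ℝ + (k₂ (p - (0, y)) * u y) • snd ℝ ℝ ℝ) p := by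
  refine (((hderiv _ (by simpa using hp)).comp p
    ((hasFDerivAt_id p).sub_const (0, y))).mul_const (u y)).congr_fderiv ?_
  ext <;> simp [mul_comm]

theorem hasFDerivAt_smear (hk : IsSmearableKernel k) (hk₁ : IsSmearableKernel k₁)
    (hk₂ : IsSmearableKernel k₂)
    (hderiv : ∀ v : ℝ × ℝ, 0 < v.1 → HasFDerivAt k (k₁ v • fst ℝ ℝ ℝ + k₂ v • snd ℝ ℝ ℝ) v)
    (hu : Continuous u) (hC : ∀ y, |u y| ≤ C)
    {p₀ : ℝ × ℝ} (hp₀ : 0 < p₀.1) :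
    HasFDerivAt (smear k u) (smear k₁ u p₀ • fst ℝ ℝ ℝ + smear k₂ u p₀ • snd ℝ ℝ ℝ) p₀ := by
  obtain ⟨M₁, hM₁⟩ := hk₁.exists_norm_integrand_le hC (p₀ := p₀)
  obtain ⟨M₂, hM₂⟩ := hk₂.exists_norm_integrand_le hC (p₀ := p₀)
  have hball : Metric.ball p₀ (p₀.1 / 2) ∈ 𝓝 p₀ := Metric.ball_mem_nhds _ (by linarith)
  have hint₁ := hk₁.integrable_integrand hu hC hp₀
  have hint₂ := hk₂.integrable_integrand hu hC hp₀
  have h := hasFDerivAt_integral_of_dominated_of_fderiv_le hball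
    (eventually_of_mem hball fun p hp =>
      (hk.continuous_integrand hu (fst_mem_Ioo_of_mem_ball hp).1).aestronglyMeasurable)
    (hk.integrable_integrand hu hC hp₀)
    ((hint₁.smul_const (fst ℝ ℝ ℝ)).add (hint₂.smul_const (snd ℝ ℝ ℝ))).aestronglyMeasurable
    (.of_forall fun y p hp => (norm_smul_fst_add_smul_snd_le _ _).trans
      ((add_le_add (hM₁ p hp y) (hM₂ p hp y)).trans_eq (add_mul _ _ _).symm))
    ((integrable_inv_one_add_sq.comp_sub_right p₀.2).const_mul (M₁ + M₂))
    (.of_forall fun y p hp => hasFDerivAt_smear_integrand hderiv (fst_mem_Ioo_of_mem_ball hp).1 y)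
  rwa [integral_add (hint₁.smul_const _) (hint₂.smul_const _), integral_smul_const,
    integral_smul_const] at h

theorem contDiffOn_smear (hk : IsSmearableKernel k) (hk₁ : IsSmearableKernel k₁)
    (hk₂ : IsSmearableKernel k₂)
    (hderiv : ∀ v : ℝ × ℝ, 0 < v.1 → HasFDerivAt k (k₁ v • fst ℝ ℝ ℝ + k₂ v • snd ℝ ℝ ℝ) v)
    (hu : Continuous u) (hC : ∀ y, |u y| ≤ C) :
    ContDiffOn ℝ 1 (smear k u) {p | 0 < p.1} :=
  contDiffOn_one_of_hasFDerivAt (isOpen_lt continuous_const continuous_fst)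
    (fun _ hp => hasFDerivAt_smear hk hk₁ hk₂ hderiv hu hC hp)
    (fun _ hp => (((hk₁.continuousAt_smear hu hC hp).smul continuousAt_const).add
      ((hk₂.continuousAt_smear hu hC hp).smul continuousAt_const)).continuousWithinAt)

end Smear

section SmearLinear

variable {k k₁ k₂ : ℝ × ℝ → ℝ} {u : ℝ → ℝ} {C : ℝ} {p : ℝ × ℝ}

lemma smear_add (hk₁ : IsSmearableKernel k₁) (hk₂ : IsSmearableKernel k₂) (hu : Continuous u)
    (hC : ∀ y, |u y| ≤ C) (hp : 0 < p.1) :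
    smear (k₁ + k₂) u p = smear k₁ u p + smear k₂ u p := by
  simp only [smear, Pi.add_apply, add_mul]
  exact integral_add (hk₁.integrable_integrand hu hC hp) (hk₂.integrable_integrand hu hC hp)

lemma smear_fst_mul (k : ℝ × ℝ → ℝ) (u : ℝ → ℝ) (p : ℝ × ℝ) :
    smear (fun v => v.1 * k v) u p = p.1 * smear k u p := by
  simp only [smear, Prod.fst_sub, sub_zero, mul_assoc]
  exact integral_const_mul _ _

lemma smear_congr (h : ∀ v : ℝ × ℝ, 0 < v.1 → k₁ v = k₂ v) (hp : 0 < p.1) :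
    smear k₁ u p = smear k₂ u p :=
  integral_congr_ae (.of_forall fun y => by simp only; rw [h _ (by simpa using hp)])

end SmearLinear

lemma abs_mul_rpow_mul_le {q x f c : ℝ} (hq : 0 < q) (hx : x ^ 2 ≤ q) (hf : |f| ≤ c) :
    |x * q ^ (-(3 : ℝ) / 2) * f| ≤ c / q := by
  have hsqrt : |x| * q ^ (-(3 : ℝ) / 2) ≤ q⁻¹ := calc
    |x| * q ^ (-(3 : ℝ) / 2) ≤ q ^ (1 / (2 : ℝ)) * q ^ (-(3 : ℝ) / 2) := by
      gcongr; rw [← Real.sqrt_eq_rpow]; exact Real.abs_le_sqrt hx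
    _ = q⁻¹ := by rw [← Real.rpow_add hq, ← Real.rpow_neg_one]; norm_num
  calc |x * q ^ (-(3 : ℝ) / 2) * f| = |x| * q ^ (-(3 : ℝ) / 2) * |f| := by
        rw [abs_mul, abs_mul, abs_of_pos (Real.rpow_pos_of_pos hq _)]
    _ ≤ q⁻¹ * c := mul_le_mul hsqrt hf (abs_nonneg _) (inv_nonneg.2 hq.le)
    _ = c / q := inv_mul_eq_div q c

lemma hasFDerivAt_sq_add_sq_rpow {v : ℝ × ℝ} (hq : v.1 ^ 2 + v.2 ^ 2 ≠ 0) (e : ℝ) :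
    HasFDerivAt (fun v : ℝ × ℝ => (v.1 ^ 2 + v.2 ^ 2) ^ e)
      ((e * (v.1 ^ 2 + v.2 ^ 2) ^ (e - 1)) •
        ((2 * v.1) • fst ℝ ℝ ℝ + (2 * v.2) • snd ℝ ℝ ℝ)) v := by
  have hfst : HasFDerivAt (fun v : ℝ × ℝ => v.1) (fst ℝ ℝ ℝ) v := hasFDerivAt_fst
  have hsnd : HasFDerivAt (fun v : ℝ × ℝ => v.2) (snd ℝ ℝ ℝ) v := hasFDerivAt_snd
  refine (((hfst.pow 2).fun_add (hsnd.pow 2)).rpow_const (p := e) (Or.inl hq)).congr_fderiv ?_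
  ext <;> simp

lemma sq_fst_le_sq_add_sq (v : ℝ × ℝ) : v.1 ^ 2 ≤ v.1 ^ 2 + v.2 ^ 2 :=
  le_add_of_nonneg_right (sq_nonneg _)

lemma sq_snd_le_sq_add_sq (v : ℝ × ℝ) : v.2 ^ 2 ≤ v.1 ^ 2 + v.2 ^ 2 :=
  le_add_of_nonneg_left (sq_nonneg _)

lemma sq_div_sq_add_sq_mem_Icc (v : ℝ × ℝ) :
    v.1 ^ 2 / (v.1 ^ 2 + v.2 ^ 2) ∈ Set.Icc 0 1 ∧ v.2 ^ 2 / (v.1 ^ 2 + v.2 ^ 2) ∈ Set.Icc 0 1 :=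
  ⟨⟨by positivity, div_le_one_of_le₀ (sq_fst_le_sq_add_sq v) (by positivity)⟩,
    ⟨by positivity, div_le_one_of_le₀ (sq_snd_le_sq_add_sq v) (by positivity)⟩⟩

/- `kernelA`, `kernelB` are the Joyce solutions of a point mass at the boundary point `η = 0`:
`smearedA u ρ η = ∫ kernelA (ρ, η - y) * u y`. They and their partial derivatives `_dρ`, `_dη`
are written as `(ρ or η) * (ρ² + η²) ^ (-3/2) * (bounded factor)`, the shape that
`abs_mul_rpow_mul_le` bounds by `C / (ρ² + η²)`. -/

noncomputable def kernelA (v : ℝ × ℝ) : ℝ :=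
  v.2 * (v.1 ^ 2 + v.2 ^ 2) ^ (-(3 : ℝ) / 2) * (-v.1 / 2)

noncomputable def kernelA_dρ (v : ℝ × ℝ) : ℝ :=
  v.2 * (v.1 ^ 2 + v.2 ^ 2) ^ (-(3 : ℝ) / 2) * ((3 * (v.1 ^ 2 / (v.1 ^ 2 + v.2 ^ 2)) - 1) / 2)

noncomputable def kernelA_dη (v : ℝ × ℝ) : ℝ :=
  v.1 * (v.1 ^ 2 + v.2 ^ 2) ^ (-(3 : ℝ) / 2) * ((3 * (v.2 ^ 2 / (v.1 ^ 2 + v.2 ^ 2)) - 1) / 2)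

noncomputable def kernelB (v : ℝ × ℝ) : ℝ :=
  v.1 * (v.1 ^ 2 + v.2 ^ 2) ^ (-(3 : ℝ) / 2) * (v.1 / 2)

noncomputable def kernelB_dρ (v : ℝ × ℝ) : ℝ :=
  v.1 * (v.1 ^ 2 + v.2 ^ 2) ^ (-(3 : ℝ) / 2) * (1 - 3 / 2 * (v.1 ^ 2 / (v.1 ^ 2 + v.2 ^ 2)))

noncomputable def kernelB_dη (v : ℝ × ℝ) : ℝ :=
  v.2 * (v.1 ^ 2 + v.2 ^ 2) ^ (-(3 : ℝ) / 2) * (-3 / 2 * (v.1 ^ 2 / (v.1 ^ 2 + v.2 ^ 2)))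

section Kernels

variable {v : ℝ × ℝ}

lemma hasFDerivAt_kernelA (hv : 0 < v.1) :
    HasFDerivAt kernelA (kernelA_dρ v • fst ℝ ℝ ℝ + kernelA_dη v • snd ℝ ℝ ℝ) v := by
  have hq : v.1 ^ 2 + v.2 ^ 2 ≠ 0 := by positivity
  have hfst : HasFDerivAt (fun v : ℝ × ℝ => v.1) (fst ℝ ℝ ℝ) v := hasFDerivAt_fst
  have hsnd : HasFDerivAt (fun v : ℝ × ℝ => v.2) (snd ℝ ℝ ℝ) v := hasFDerivAt_snd
  have h := (hsnd.fun_mul (hasFDerivAt_sq_add_sq_rpow hq (-(3 : ℝ) / 2))).fun_mul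
    (hfst.const_mul (-1 / 2))
  refine (h.congr_of_eventuallyEq (.of_forall fun w => ?_)).congr_fderiv ?_
  · simp only [kernelA]; ring
  · ext <;> simp [kernelA_dρ, kernelA_dη, Real.rpow_sub_one hq] <;> ring

lemma hasFDerivAt_kernelB (hv : 0 < v.1) :
    HasFDerivAt kernelB (kernelB_dρ v • fst ℝ ℝ ℝ + kernelB_dη v • snd ℝ ℝ ℝ) v := by
  have hq : v.1 ^ 2 + v.2 ^ 2 ≠ 0 := by positivity
  have hfst : HasFDerivAt (fun v : ℝ × ℝ => v.1) (fst ℝ ℝ ℝ) v := hasFDerivAt_fst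
  have h := (hfst.fun_mul (hasFDerivAt_sq_add_sq_rpow hq (-(3 : ℝ) / 2))).fun_mul
    (hfst.const_mul (1 / 2))
  refine (h.congr_of_eventuallyEq (.of_forall fun w => ?_)).congr_fderiv ?_
  · simp only [kernelB]; ring
  · ext <;> simp [kernelB_dρ, kernelB_dη, Real.rpow_sub_one hq] <;> ring

lemma fst_mul_kernelA_dρ_add_kernelB_dη (v : ℝ × ℝ) :
    v.1 * (kernelA_dρ v + kernelB_dη v) = kernelA v := by
  simp only [kernelA, kernelA_dρ, kernelB_dη]; ring

lemma kernelA_dη_eq_kernelB_dρ (hv : 0 < v.1) : kernelA_dη v = kernelB_dρ v := by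
  have hq : v.1 ^ 2 + v.2 ^ 2 ≠ 0 := by positivity
  simp only [kernelA_dη, kernelB_dρ]; field_simp; ring

lemma isSmearableKernel_kernelA : IsSmearableKernel kernelA where
  continuousAt _ hv := (hasFDerivAt_kernelA hv).continuousAt
  decay R := ⟨R, fun v hv hR => abs_mul_rpow_mul_le (by positivity) (sq_snd_le_sq_add_sq v)
    (abs_le.2 ⟨by linarith, by linarith⟩)⟩

lemma isSmearableKernel_kernelB : IsSmearableKernel kernelB where
  continuousAt _ hv := (hasFDerivAt_kernelB hv).continuousAt
  decay R := ⟨R, fun v hv hR => abs_mul_rpow_mul_le (by positivity) (sq_fst_le_sq_add_sq v)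
    (abs_le.2 ⟨by linarith, by linarith⟩)⟩

lemma isSmearableKernel_kernelA_dρ : IsSmearableKernel kernelA_dρ where
  continuousAt _ hv := by
    unfold kernelA_dρ; fun_prop (disch := first | positivity | exact Or.inl (by positivity))
  decay _ := ⟨1, fun v hv _ => by
    obtain ⟨⟨h₀, h₁⟩, -⟩ := sq_div_sq_add_sq_mem_Icc v
    exact abs_mul_rpow_mul_le (by positivity) (sq_snd_le_sq_add_sq v)
      (abs_le.2 ⟨by linarith, by linarith⟩)⟩

lemma isSmearableKernel_kernelA_dη : IsSmearableKernel kernelA_dη where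
  continuousAt _ hv := by
    unfold kernelA_dη; fun_prop (disch := first | positivity | exact Or.inl (by positivity))
  decay _ := ⟨1, fun v hv _ => by
    obtain ⟨-, h₀, h₁⟩ := sq_div_sq_add_sq_mem_Icc v
    exact abs_mul_rpow_mul_le (by positivity) (sq_fst_le_sq_add_sq v)
      (abs_le.2 ⟨by linarith, by linarith⟩)⟩

lemma isSmearableKernel_kernelB_dρ : IsSmearableKernel kernelB_dρ where
  continuousAt _ hv := by
    unfold kernelB_dρ; fun_prop (disch := first | positivity | exact Or.inl (by positivity))
  decay _ := ⟨1, fun v hv _ => by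
    obtain ⟨⟨h₀, h₁⟩, -⟩ := sq_div_sq_add_sq_mem_Icc v
    exact abs_mul_rpow_mul_le (by positivity) (sq_fst_le_sq_add_sq v)
      (abs_le.2 ⟨by linarith, by linarith⟩)⟩

lemma isSmearableKernel_kernelB_dη : IsSmearableKernel kernelB_dη where
  continuousAt _ hv := by
    unfold kernelB_dη; fun_prop (disch := first | positivity | exact Or.inl (by positivity))
  decay _ := ⟨3 / 2, fun v hv _ => by
    obtain ⟨⟨h₀, h₁⟩, -⟩ := sq_div_sq_add_sq_mem_Icc v
    exact abs_mul_rpow_mul_le (by positivity) (sq_snd_le_sq_add_sq v)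
      (abs_le.2 ⟨by linarith, by linarith⟩)⟩

end Kernels

lemma smearedA_eq_smear (u : ℝ → ℝ) (ρ η : ℝ) : smearedA u ρ η = smear kernelA u (ρ, η) := by
  rw [smearedA, smear, ← integral_const_mul]
  congr 1 with y
  simp only [kernelA, Prod.fst_sub, Prod.snd_sub, sub_zero]
  ring

lemma smearedB_eq_smear (u : ℝ → ℝ) (ρ η : ℝ) : smearedB u ρ η = smear kernelB u (ρ, η) := by
  rw [smearedB, smear, ← integral_const_mul]
  congr 1 with y
  simp only [kernelB, Prod.fst_sub, Prod.snd_sub, sub_zero]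
  ring

section SmearedJoyce

variable {u : ℝ → ℝ} {C : ℝ}

lemma fst_mul_smear_kernelA_dρ_add_smear_kernelB_dη (hu : Continuous u)
    (hC : ∀ y, |u y| ≤ C) {p : ℝ × ℝ} (hp : 0 < p.1) :
    p.1 * (smear kernelA_dρ u p + smear kernelB_dη u p) = smear kernelA u p := by
  rw [← smear_add isSmearableKernel_kernelA_dρ isSmearableKernel_kernelB_dη hu hC hp,
    ← smear_fst_mul]
  simp only [Pi.add_apply, fst_mul_kernelA_dρ_add_kernelB_dη]

lemma hasFDerivAt_smearedA (hu : Continuous u) (hC : ∀ y, |u y| ≤ C) {p : ℝ × ℝ}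
    (hp : 0 < p.1) :
    HasFDerivAt (fun p : ℝ × ℝ => smearedA u p.1 p.2)
      (smear kernelA_dρ u p • fst ℝ ℝ ℝ + smear kernelA_dη u p • snd ℝ ℝ ℝ) p := by
  simp only [smearedA_eq_smear, Prod.mk.eta]
  exact hasFDerivAt_smear isSmearableKernel_kernelA isSmearableKernel_kernelA_dρ
    isSmearableKernel_kernelA_dη (fun _ => hasFDerivAt_kernelA) hu hC hp

lemma hasFDerivAt_smearedB (hu : Continuous u) (hC : ∀ y, |u y| ≤ C) {p : ℝ × ℝ}
    (hp : 0 < p.1) :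
    HasFDerivAt (fun p : ℝ × ℝ => smearedB u p.1 p.2)
      (smear kernelB_dρ u p • fst ℝ ℝ ℝ + smear kernelB_dη u p • snd ℝ ℝ ℝ) p := by
  simp only [smearedB_eq_smear, Prod.mk.eta]
  exact hasFDerivAt_smear isSmearableKernel_kernelB isSmearableKernel_kernelB_dρ
    isSmearableKernel_kernelB_dη (fun _ => hasFDerivAt_kernelB) hu hC hp

lemma contDiffOn_smearedA (hu : Continuous u) (hC : ∀ y, |u y| ≤ C) :
    ContDiffOn ℝ 1 (fun p : ℝ × ℝ => smearedA u p.1 p.2) {p : ℝ × ℝ | 0 < p.1} := by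
  simp only [smearedA_eq_smear, Prod.mk.eta]
  exact contDiffOn_smear isSmearableKernel_kernelA isSmearableKernel_kernelA_dρ
    isSmearableKernel_kernelA_dη (fun _ => hasFDerivAt_kernelA) hu hC

lemma contDiffOn_smearedB (hu : Continuous u) (hC : ∀ y, |u y| ≤ C) :
    ContDiffOn ℝ 1 (fun p : ℝ × ℝ => smearedB u p.1 p.2) {p : ℝ × ℝ | 0 < p.1} := by
  simp only [smearedB_eq_smear, Prod.mk.eta]
  exact contDiffOn_smear isSmearableKernel_kernelB isSmearableKernel_kernelB_dρ
    isSmearableKernel_kernelB_dη (fun _ => hasFDerivAt_kernelB) hu hC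

end SmearedJoyce

/-- The smeared Joyce solutions are C¹ on the upper half-plane and satisfy the
Joyce equation. -/
theorem smeared_joyce_solution (u : ℝ → ℝ) (hc : Continuous u)
    (hb : ∃ C : ℝ, ∀ y : ℝ, |u y| ≤ C) :
    ContDiffOn ℝ 1 (fun p : ℝ × ℝ => smearedA u p.1 p.2) {p : ℝ × ℝ | 0 < p.1} ∧
    ContDiffOn ℝ 1 (fun p : ℝ × ℝ => smearedB u p.1 p.2) {p : ℝ × ℝ | 0 < p.1} ∧
    ∀ ρ η : ℝ, 0 < ρ →
      ρ * (pdr (smearedA u) ρ η + pde (smearedB u) ρ η) = smearedA u ρ η ∧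
      pde (smearedA u) ρ η = pdr (smearedB u) ρ η := by
  obtain ⟨C, hC⟩ := hb
  refine ⟨contDiffOn_smearedA hc hC, contDiffOn_smearedB hc hC, fun ρ η hρ => ?_⟩
  have hA := hasFDerivAt_smearedA hc hC (p := (ρ, η)) hρ
  have hB := hasFDerivAt_smearedB hc hC (p := (ρ, η)) hρ
  rw [pdr_eq_of_hasFDerivAt hA, pde_eq_of_hasFDerivAt hA, pdr_eq_of_hasFDerivAt hB,
    pde_eq_of_hasFDerivAt hB, smearedA_eq_smear]
  exact ⟨fst_mul_smear_kernelA_dρ_add_smear_kernelB_dη hc hC (p := (ρ, η)) hρ,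
    smear_congr (fun _ => kernelA_dη_eq_kernelB_dρ) hρ⟩
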